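/- arXiv:2009.10206 — 2 statements merged into one kernel-verified Lean document; each statement's English description precedes it below -/
import Mathlib

section
/- Let α > −1 and n ∈ ℕ, and suppose L_{n+1}^{(α+1)} and L_n^{(α)} have no common zeros. Let 0 < z_1 < ⋯ < z_{n+1} be the zeros of L_{n+1}^{(α+1)} and 0 < x_1 < ⋯ < x_n be the zeros of L_n^{(α)}. Then the zeros interlace, i.e. z_1 < x_1 < z_2 < x_2 < ⋯ < x_n < z_{n+1}, if and only if the smallest zero z_1 of L_{n+1}^{(α+1)} satisfies z_1 > n+1. -/
open Polynomial

/-- The generalized Laguerre polynomial `L_n^{(α)}(x) =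
∑_{k=0}^{n} (−1)^k [∏_{j=k+1}^{n}(α+j)] / ((n−k)!·k!) · x^k`. -/
noncomputable def laguerre (α : ℝ) (n : ℕ) : Polynomial ℝ :=
  ∑ k ∈ Finset.range (n + 1),
    Polynomial.C ((-1 : ℝ) ^ k * (∏ j ∈ Finset.Icc (k + 1) n, (α + (j : ℝ))) /
      ((n - k).factorial * k.factorial)) * Polynomial.X ^ k

/-!
At a zero `t` of `L_{n+1}^{(α+1)}` the contiguous relations
`x L_{n+1}^{(α+1)}' = (n+1) L_{n+1}^{(α+1)} - (α+n+2) L_n^{(α+1)}` and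
`(x-n-1) L_n^{(α+1)} = (α+n+1) L_n^{(α)} - (n+1) L_{n+1}^{(α+1)}` combine to
`(α+n+2)(α+n+1) L_n^{(α)}(t) = (n+1-t) t L_{n+1}^{(α+1)}'(t)`.
At the `i`-th zero `z_i` the derivative has sign `(-1)^i`, and `L_n^{(α)}(z_i)` has sign
`(-1)^{k_i}` where `k_i` is the number of zeros `x_j` below `z_i`; hence `(-1)^{k_i+i} (n+1-z_i) > 0`.
Interlacing gives `k_1 = 0` and so `z_1 > n+1`. Conversely, if `z_1 > n+1` then every `k_i + i` is
odd, so the nondecreasing sequence `k_1 ≤ ⋯ ≤ k_{n+1} ≤ n` increases at each step, i.e.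
`k_i = i - 1`, which is interlacing.
-/

open Finset
open scoped Nat

lemma laguerre_coeff (α : ℝ) (n m : ℕ) :
    (laguerre α n).coeff m = if m ≤ n then
      (-1) ^ m * (∏ j ∈ Icc (m + 1) n, (α + j)) / ((n - m)! * m !) else 0 := by
  simp only [laguerre, finsetSum_coeff, coeff_C_mul, coeff_X_pow, mul_ite, mul_one, mul_zero,
    sum_ite_eq, mem_range, Nat.lt_succ_iff]

lemma laguerre_coeff_add (α : ℝ) (m d : ℕ) :
    (laguerre α (m + d)).coeff m =
      (-1) ^ m * (∏ j ∈ Icc (m + 1) (m + d), (α + j)) / (d ! * m !) := by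
  simp [laguerre_coeff]

lemma laguerre_coeff_of_lt {α : ℝ} {n m : ℕ} (h : n < m) : (laguerre α n).coeff m = 0 := by
  simp [laguerre_coeff, h.not_ge]

lemma laguerre_coeff_self (α : ℝ) (n : ℕ) : (laguerre α n).coeff n = (-1) ^ n / n ! := by
  simp [laguerre_coeff]

lemma laguerre_natDegree (α : ℝ) (n : ℕ) : (laguerre α n).natDegree = n :=
  natDegree_eq_of_le_of_coeff_ne_zero
    (natDegree_le_iff_coeff_eq_zero.2 fun _ hm => laguerre_coeff_of_lt (by exact_mod_cast hm))
    (by simp [laguerre_coeff_self, Nat.factorial_ne_zero])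

lemma laguerre_leadingCoeff (α : ℝ) (n : ℕ) :
    (laguerre α n).leadingCoeff = (-1) ^ n / n ! := by
  rw [leadingCoeff, laguerre_natDegree, laguerre_coeff_self]

lemma prod_Icc_add_one_eq (α : ℝ) (a b : ℕ) :
    ∏ j ∈ Icc a b, (α + 1 + j) = ∏ j ∈ Icc (a + 1) (b + 1), (α + j) := by
  rw [← map_add_right_Icc, prod_map]
  exact prod_congr rfl fun j _ => by push_cast [addRightEmbedding_apply]; ring

lemma laguerre_coeff_succ_degree (α : ℝ) (n m : ℕ) :
    ((n : ℝ) + 1 - m) * (laguerre α (n + 1)).coeff m =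
      (α + n + 1) * (laguerre α n).coeff m := by
  rcases lt_trichotomy m (n + 1) with hm | rfl | hm
  · obtain ⟨d, rfl⟩ := Nat.exists_eq_add_of_le (Nat.lt_succ_iff.mp hm)
    rw [laguerre_coeff_add, add_assoc, laguerre_coeff_add, ← add_assoc,
      prod_Icc_succ_top (by omega), Nat.factorial_succ]
    push_cast
    field_simp
    ring
  · simp [laguerre_coeff_of_lt]
  · simp [laguerre_coeff_of_lt hm, laguerre_coeff_of_lt (n.lt_succ_self.trans hm)]

lemma laguerre_coeff_succ_param (α : ℝ) (n m : ℕ) :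
    (α + n + 1) * (laguerre α n).coeff m = (α + m + 1) * (laguerre (α + 1) n).coeff m := by
  rcases le_or_gt m n with hm | hm
  · obtain ⟨d, rfl⟩ := Nat.exists_eq_add_of_le hm
    have hmd : m + 1 ≤ m + d + 1 := by omega
    have h_top := prod_Icc_succ_top hmd (fun j : ℕ => α + j)
    have h_bot := mul_prod_Ioc_eq_prod_Icc (f := fun j : ℕ => α + j) hmd
    rw [← Icc_add_one_left_eq_Ioc] at h_bot
    rw [laguerre_coeff_add, laguerre_coeff_add, prod_Icc_add_one_eq]
    push_cast at h_top h_bot ⊢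
    linear_combination (-(-1) ^ m / (d ! * m ! : ℝ)) * (h_bot.trans h_top)
  · simp [laguerre_coeff_of_lt hm]

lemma laguerre_coeff_succ_index (α : ℝ) (n m : ℕ) :
    (m + 1) * (α + m + 1) * (laguerre α n).coeff (m + 1) = (m - n) * (laguerre α n).coeff m := by
  rcases lt_or_ge m n with hm | hm
  · obtain ⟨d, rfl⟩ : ∃ d, n = m + 1 + d := ⟨n - (m + 1), by omega⟩
    have h_coeff := laguerre_coeff_add α m (d + 1)
    rw [show m + (d + 1) = m + 1 + d by omega, ← mul_prod_Ioc_eq_prod_Icc (by omega),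
      ← Icc_add_one_left_eq_Ioc] at h_coeff
    rw [laguerre_coeff_add, h_coeff, Nat.factorial_succ m, Nat.factorial_succ d]
    push_cast
    field_simp
    ring
  · rw [laguerre_coeff_of_lt (by omega)]
    rcases hm.eq_or_lt with rfl | hm
    · simp
    · simp [laguerre_coeff_of_lt hm]

lemma laguerre_X_mul_derivative (α : ℝ) (n : ℕ) :
    X * derivative (laguerre α (n + 1)) =
      C ((n : ℝ) + 1) * laguerre α (n + 1) - C (α + n + 1) * laguerre α n := by
  ext m
  have h_deg := laguerre_coeff_succ_degree α n m
  rw [coeff_sub, coeff_C_mul, coeff_C_mul]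
  cases m with
  | zero =>
    simp only [mul_coeff_zero, coeff_X_zero, zero_mul]
    push_cast at h_deg
    linear_combination -h_deg
  | succ k =>
    rw [coeff_X_mul, coeff_derivative]
    push_cast at h_deg
    linear_combination -h_deg

lemma laguerre_X_sub_mul (α : ℝ) (n : ℕ) :
    (X - C ((n : ℝ) + 1)) * laguerre (α + 1) n =
      C (α + n + 1) * laguerre α n - C ((n : ℝ) + 1) * laguerre (α + 1) (n + 1) := by
  ext m
  have h_deg := laguerre_coeff_succ_degree (α + 1) n m
  have h_param := laguerre_coeff_succ_param α n m
  rw [sub_mul, coeff_sub, coeff_sub, coeff_C_mul, coeff_C_mul, coeff_C_mul]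
  cases m with
  | zero =>
    simp only [mul_coeff_zero, coeff_X_zero, zero_mul]
    push_cast at h_deg h_param
    linear_combination h_deg - h_param
  | succ k =>
    rw [coeff_X_mul]
    have h_index := laguerre_coeff_succ_index (α + 1) n k
    push_cast at h_deg h_param h_index
    rcases lt_trichotomy k n with hk | rfl | hk
    · -- `h_index` determines the coefficient of `x ^ k` only up to the factor `n - k`
      have hk' : (n : ℝ) - k ≠ 0 := sub_ne_zero.2 (by exact_mod_cast hk.ne')
      refine mul_left_cancel₀ hk' ?_
      linear_combination (-(n - k : ℝ)) * h_param + (n + 1) * h_deg + h_index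
    · rw [laguerre_coeff_self, laguerre_coeff_self, laguerre_coeff_of_lt (Nat.lt_succ_self _),
        laguerre_coeff_of_lt (Nat.lt_succ_self _), Nat.factorial_succ]
      push_cast
      field_simp
      ring
    · simp [laguerre_coeff_of_lt hk, laguerre_coeff_of_lt (Nat.succ_lt_succ hk),
        laguerre_coeff_of_lt (hk.trans k.lt_succ_self)]

lemma laguerre_eval_mul_eq_of_isRoot {α t : ℝ} {n : ℕ}
    (ht : (laguerre (α + 1) (n + 1)).IsRoot t) :
    (α + n + 2) * (α + n + 1) * (laguerre α n).eval t =
      (n + 1 - t) * t * (derivative (laguerre (α + 1) (n + 1))).eval t := by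
  have h_deriv := congrArg (eval t) (laguerre_X_mul_derivative (α + 1) n)
  have h_shift := congrArg (eval t) (laguerre_X_sub_mul α n)
  simp only [eval_mul, eval_sub, eval_C, eval_X, ht.eq_zero, mul_zero, sub_zero] at h_deriv h_shift
  linear_combination (-(α + n + 2)) * h_shift + (t - (n + 1)) * h_deriv

section RootProducts

variable {R ι : Type*} [CommRing R]

lemma C_leadingCoeff_mul_prod_X_sub_C_of_isRoot_iff [IsDomain R] {p : R[X]} {s : Finset ι}
    {w : ι → R} (hw : Set.InjOn w s) (hdeg : p.natDegree = #s)
    (hroots : ∀ t, p.IsRoot t ↔ ∃ i ∈ s, w i = t) :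
    C p.leadingCoeff * ∏ i ∈ s, (X - C (w i)) = p := by
  classical
  have hp : p ≠ 0 := by
    rintro rfl
    obtain ⟨i, hi, -⟩ := (hroots 0).1 (by simp)
    rw [natDegree_zero] at hdeg
    exact (card_pos.2 ⟨i, hi⟩).ne hdeg
  have h_sub : (s.image w).val ≤ p.roots := (Multiset.le_iff_subset (s.image w).nodup).2
    fun t ht => by
      obtain ⟨i, hi, rfl⟩ := mem_image.1 ht
      exact (mem_roots hp).2 ((hroots _).2 ⟨i, hi, rfl⟩)
  have h_roots : p.roots = (s.image w).val := by
    refine (Multiset.eq_of_le_of_card_le h_sub ?_).symm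
    rw [card_val, card_image_of_injOn hw, ← hdeg]
    exact card_roots' p
  conv_rhs => rw [← C_leadingCoeff_mul_prod_multiset_X_sub_C (p := p) (by
    rw [h_roots, card_val, card_image_of_injOn hw, hdeg])]
  rw [h_roots, ← prod_image (f := fun t => X - C t) hw]
  rfl

lemma eval_derivative_prod_C_sub_X [DecidableEq ι] {s : Finset ι} (w : ι → R) {i : ι}
    (hi : i ∈ s) :
    (derivative (∏ j ∈ s, (C (w j) - X))).eval (w i) = -∏ j ∈ s.erase i, (w j - w i) := by
  rw [← mul_prod_erase s _ hi, derivative_mul]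
  simp [eval_prod]

variable [LinearOrder R] [IsStrictOrderedRing R]

lemma neg_one_pow_card_filter_lt_mul_prod_sub_pos {s : Finset ι} {w : ι → R} {t : R}
    (h : ∀ i ∈ s, w i ≠ t) :
    0 < (-1) ^ #{i ∈ s | w i < t} * ∏ i ∈ s, (w i - t) := by
  rw [← prod_filter_mul_prod_filter_not s (fun i => w i < t), ← mul_assoc, ← prod_neg]
  refine mul_pos (prod_pos fun i hi => ?_) (prod_pos fun i hi => ?_)
  · rw [mem_filter] at hi
    linarith [hi.2]
  · rw [mem_filter] at hi
    exact sub_pos.2 ((not_lt.1 hi.2).lt_of_ne' (h i hi.1))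

lemma neg_one_pow_mul_eval_derivative_prod_C_sub_X_pos {m i : ℕ} {w : ℕ → R}
    (hw : StrictMonoOn w (Icc 1 m)) (hi : i ∈ Icc 1 m) :
    0 < (-1) ^ i * (derivative (∏ j ∈ Icc 1 m, (C (w j) - X))).eval (w i) := by
  have h_below : {j ∈ (Icc 1 m).erase i | w j < w i} = Icc 1 (i - 1) := by
    ext j
    simp only [mem_filter, mem_erase]
    constructor
    · rintro ⟨⟨-, hj⟩, hlt⟩
      have := (hw.lt_iff_lt hj hi).1 hlt
      rw [mem_Icc] at hj ⊢
      omega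
    · intro hj
      rw [mem_Icc] at hi hj
      have hj' : j ∈ Icc 1 m := mem_Icc.2 ⟨hj.1, by omega⟩
      have hlt : j < i := by omega
      exact ⟨⟨hlt.ne, hj'⟩, hw hj' (mem_Icc.2 hi) hlt⟩
  have h_pos := neg_one_pow_card_filter_lt_mul_prod_sub_pos (s := (Icc 1 m).erase i) (t := w i)
    (fun j hj => hw.injOn.ne (mem_of_mem_erase hj) hi (ne_of_mem_erase hj))
  rw [h_below, Nat.card_Icc, Nat.add_sub_cancel] at h_pos
  rw [eval_derivative_prod_C_sub_X w hi]
  obtain ⟨k, rfl⟩ : ∃ k, i = k + 1 := ⟨i - 1, by simp at hi; omega⟩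
  simpa [pow_succ] using h_pos

end RootProducts

lemma laguerre_eq_C_mul_prod {α : ℝ} {n : ℕ} {x : ℕ → ℝ} (hx : StrictMonoOn x (Icc 1 n))
    (hroots : ∀ t, (laguerre α n).eval t = 0 ↔ ∃ i ∈ Icc 1 n, x i = t) :
    laguerre α n = C (n ! : ℝ)⁻¹ * ∏ i ∈ Icc 1 n, (C (x i) - X) := by
  have h_card : #(Icc 1 n) = n := by simp
  conv_lhs => rw [← C_leadingCoeff_mul_prod_X_sub_C_of_isRoot_iff hx.injOn
    (by rw [laguerre_natDegree, h_card]) hroots]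
  have h_flip :
      ∏ i ∈ Icc 1 n, (X - C (x i)) = C ((-1) ^ n) * ∏ i ∈ Icc 1 n, (C (x i) - X) := by
    have h_neg := prod_neg (s := Icc 1 n) (fun i => C (x i) - X)
    rw [h_card] at h_neg
    rw [C_pow, C_neg, C_1, ← h_neg]
    simp
  rw [h_flip, ← mul_assoc, ← C_mul, laguerre_leadingCoeff, div_mul_eq_mul_div, ← pow_add,
    ← two_mul, pow_mul, neg_one_sq, one_pow, one_div]

lemma laguerre_sign_of_isRoot {α t ε δ : ℝ} {n : ℕ} (hα : -1 < α)
    (ht : (laguerre (α + 1) (n + 1)).IsRoot t) (ht_pos : 0 < t)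
    (hε : 0 < ε * (laguerre α n).eval t)
    (hδ : 0 < δ * (derivative (laguerre (α + 1) (n + 1))).eval t) :
    0 < ε * δ * (n + 1 - t) := by
  set D := (derivative (laguerre (α + 1) (n + 1))).eval t
  have hD : D ≠ 0 := by rintro h; simp [h] at hδ
  have hc : 0 < (α + n + 2) * (α + n + 1) := by
    have : (0 : ℝ) ≤ n := n.cast_nonneg
    apply mul_pos <;> linarith
  have h_prod := mul_pos (mul_pos hc hε) hδ
  rw [show (α + n + 2) * (α + n + 1) * (ε * (laguerre α n).eval t) * (δ * D) =
      ε * δ * (n + 1 - t) * (t * D ^ 2) by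
    linear_combination ε * δ * D * laguerre_eval_mul_eq_of_isRoot ht] at h_prod
  exact (mul_pos_iff_of_pos_right (by positivity)).1 h_prod

section Counting

variable {β : Type*} [LinearOrder β] {x : ℕ → β} {n i : ℕ} {t : β}

def numBelow (x : ℕ → β) (n : ℕ) (t : β) : ℕ := #{j ∈ Icc 1 n | x j < t}

lemma numBelow_le (x : ℕ → β) (n : ℕ) (t : β) : numBelow x n t ≤ n :=
  (card_filter_le _ _).trans (by simp)

lemma numBelow_mono : Monotone (numBelow x n) :=
  fun _ _ hst => card_le_card (monotone_filter_right _ fun _ _ h => h.trans_le hst)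

lemma le_numBelow (hx : StrictMonoOn x (Icc 1 n)) (hi : i ∈ Icc 1 n) (h : x i < t) :
    i ≤ numBelow x n t := by
  have h_sub : Icc 1 i ⊆ {j ∈ Icc 1 n | x j < t} := fun j hj => by
    rw [mem_Icc] at hi hj
    have hj' : j ∈ Icc 1 n := mem_Icc.2 ⟨hj.1, by omega⟩
    exact mem_filter.2 ⟨hj', (hx.monotoneOn hj' (mem_Icc.2 hi) hj.2).trans_lt h⟩
  simpa [numBelow] using card_le_card h_sub

lemma numBelow_lt (hx : StrictMonoOn x (Icc 1 n)) (hi : i ∈ Icc 1 n) (h : t ≤ x i) :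
    numBelow x n t < i := by
  have h_sub : {j ∈ Icc 1 n | x j < t} ⊆ Icc 1 (i - 1) := fun j hj => by
    rw [mem_filter] at hj
    have hji : j < i := (hx.lt_iff_lt hj.1 hi).1 (hj.2.trans_le h)
    rw [mem_Icc] at hj ⊢
    omega
  have := card_le_card h_sub
  rw [Nat.card_Icc] at this
  rw [mem_Icc] at hi
  exact lt_of_le_of_lt this (by omega)

lemma numBelow_eq_zero_iff : numBelow x n t = 0 ↔ ∀ i ∈ Icc 1 n, t ≤ x i := by
  simp [numBelow, filter_eq_empty_iff]

end Counting

lemma add_one_eq_of_odd_add {f : ℕ → ℕ} {n i : ℕ} (hf : MonotoneOn f (Icc 1 (n + 1)))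
    (hle : f (n + 1) ≤ n) (hodd : ∀ j ∈ Icc 1 (n + 1), Odd (f j + j))
    (hi : i ∈ Icc 1 (n + 1)) :
    f i + 1 = i := by
  have h_step : ∀ j, 1 ≤ j → j ≤ n → f j + 1 ≤ f (j + 1) := by
    intro j hj₁ hj₂
    have hj : j ∈ Icc 1 (n + 1) := mem_Icc.2 ⟨hj₁, by omega⟩
    have hj' : j + 1 ∈ Icc 1 (n + 1) := mem_Icc.2 ⟨by omega, by omega⟩
    have := hf hj hj' j.le_succ
    obtain ⟨a, ha⟩ := hodd j hj
    obtain ⟨b, hb⟩ := hodd (j + 1) hj'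
    omega
  have h_chain : ∀ d j, 1 ≤ j → j + d ≤ n + 1 → f j + d ≤ f (j + d) := by
    intro d
    induction d with
    | zero => simp
    | succ d ih =>
      intro j hj hjd
      have := ih j hj (by omega)
      have := h_step (j + d) (by omega) (by omega)
      rw [← add_assoc j d 1]
      omega
  rw [mem_Icc] at hi
  have h_lower := h_chain (i - 1) 1 le_rfl (by omega)
  have h_upper := h_chain (n + 1 - i) i hi.1 (by omega)
  rw [show 1 + (i - 1) = i by omega] at h_lower
  rw [show i + (n + 1 - i) = n + 1 by omega] at h_upper
  omega

lemma interlace_of_odd {z x : ℕ → ℝ} {n : ℕ} (hz : StrictMonoOn z (Icc 1 (n + 1)))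
    (hx : StrictMonoOn x (Icc 1 n)) (hne : ∀ i ∈ Icc 1 n, x i ≠ z i)
    (hodd : ∀ i ∈ Icc 1 (n + 1), Odd (numBelow x n (z i) + i)) :
    ∀ i ∈ Icc 1 n, z i < x i ∧ x i < z (i + 1) := by
  have h_count : ∀ i ∈ Icc 1 (n + 1), numBelow x n (z i) + 1 = i := fun i hi =>
    add_one_eq_of_odd_add (numBelow_mono.comp_monotoneOn hz.monotoneOn) (numBelow_le _ _ _) hodd hi
  intro i hi
  have hi₀ : i ∈ Icc 1 (n + 1) := by simp at hi ⊢; omega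
  have hi₁ : i + 1 ∈ Icc 1 (n + 1) := by simp at hi ⊢; omega
  constructor
  · by_contra! h
    have := le_numBelow hx hi (h.lt_of_ne (hne i hi))
    have := h_count i hi₀
    omega
  · by_contra! h
    have := numBelow_lt hx hi h
    have := h_count (i + 1) hi₁
    omega

lemma neg_one_pow_numBelow_add_mul_pos {α : ℝ} {n i : ℕ} {z x : ℕ → ℝ} (hα : -1 < α)
    (hz : StrictMonoOn z (Icc 1 (n + 1)))
    (hzroots : ∀ t, (laguerre (α + 1) (n + 1)).eval t = 0 ↔ ∃ i ∈ Icc 1 (n + 1), z i = t)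
    (hx : StrictMonoOn x (Icc 1 n))
    (hxroots : ∀ t, (laguerre α n).eval t = 0 ↔ ∃ i ∈ Icc 1 n, x i = t)
    (hi : i ∈ Icc 1 (n + 1)) (hzi : 0 < z i) (hne : ∀ j ∈ Icc 1 n, x j ≠ z i) :
    0 < (-1) ^ (numBelow x n (z i) + i) * ((n : ℝ) + 1 - z i) := by
  rw [pow_add]
  refine laguerre_sign_of_isRoot hα ((hzroots _).2 ⟨i, hi, rfl⟩) hzi ?_ ?_
  · rw [laguerre_eq_C_mul_prod hx hxroots, eval_C_mul, eval_prod, mul_left_comm]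
    simp only [eval_sub, eval_C, eval_X]
    exact mul_pos (by positivity) (neg_one_pow_card_filter_lt_mul_prod_sub_pos hne)
  · rw [laguerre_eq_C_mul_prod hz hzroots, derivative_C_mul, eval_C_mul, mul_left_comm]
    exact mul_pos (by positivity) (neg_one_pow_mul_eval_derivative_prod_C_sub_X_pos hz hi)

theorem laguerre_interlacing_iff_smallest_zero_gt_general
    (α : ℝ) (hα : -1 < α) (n : ℕ)
    (hnc : ∀ t : ℝ, ¬((laguerre (α + 1) (n + 1)).eval t = 0 ∧ (laguerre α n).eval t = 0))
    (z : ℕ → ℝ)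
    (hzpos : ∀ i ∈ Finset.Icc 1 (n + 1), 0 < z i)
    (hzmono : ∀ i ∈ Finset.Icc 1 (n + 1), ∀ j ∈ Finset.Icc 1 (n + 1), i < j → z i < z j)
    (hzroots : ∀ t : ℝ, (laguerre (α + 1) (n + 1)).eval t = 0 ↔ ∃ i ∈ Finset.Icc 1 (n + 1), z i = t)
    (x : ℕ → ℝ)
    (hxmono : ∀ i ∈ Finset.Icc 1 n, ∀ j ∈ Finset.Icc 1 n, i < j → x i < x j)
    (hxroots : ∀ t : ℝ, (laguerre α n).eval t = 0 ↔ ∃ i ∈ Finset.Icc 1 n, x i = t) :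
    (∀ i ∈ Finset.Icc 1 n, z i < x i ∧ x i < z (i + 1)) ↔ (n : ℝ) + 1 < z 1 := by
  have hz : StrictMonoOn z (Icc 1 (n + 1)) := hzmono
  have hx : StrictMonoOn x (Icc 1 n) := hxmono
  have h_one : 1 ∈ Icc 1 (n + 1) := by simp
  have h_ne : ∀ i ∈ Icc 1 (n + 1), ∀ j ∈ Icc 1 n, x j ≠ z i := fun i hi j hj h =>
    hnc (z i) ⟨(hzroots _).2 ⟨i, hi, rfl⟩, (hxroots _).2 ⟨j, hj, h⟩⟩
  have h_sign := fun i hi =>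
    neg_one_pow_numBelow_add_mul_pos hα hz hzroots hx hxroots hi (hzpos i hi) (h_ne i hi)
  constructor
  · intro h_inter
    have h_zero : numBelow x n (z 1) = 0 := numBelow_eq_zero_iff.2 fun j hj =>
      ((hz.monotoneOn h_one (by simp at hj ⊢; omega) (mem_Icc.1 hj).1).trans_lt
        (h_inter j hj).1).le
    simpa [h_zero] using h_sign 1 h_one
  · intro hz₁
    refine interlace_of_odd hz hx (fun i hi => h_ne i (by simp at hi ⊢; omega) i hi)
      fun i hi => ?_
    have h_neg : (n : ℝ) + 1 - z i < 0 :=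
      sub_neg.2 (hz₁.trans_le (hz.monotoneOn h_one hi (mem_Icc.1 hi).1))
    refine (Nat.even_or_odd _).resolve_left fun h_even => ?_
    have := h_sign i hi
    rw [h_even.neg_one_pow, one_mul] at this
    linarith

theorem laguerre_interlacing_iff_smallest_zero_gt
    (α : ℝ) (hα : -1 < α) (n : ℕ)
    (hnc : ∀ t : ℝ, ¬((laguerre (α + 1) (n + 1)).eval t = 0 ∧ (laguerre α n).eval t = 0))
    (z : ℕ → ℝ)
    (hzpos : ∀ i ∈ Finset.Icc 1 (n + 1), 0 < z i)
    (hzmono : ∀ i ∈ Finset.Icc 1 (n + 1), ∀ j ∈ Finset.Icc 1 (n + 1), i < j → z i < z j)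
    (hzroots : ∀ t : ℝ, (laguerre (α + 1) (n + 1)).eval t = 0 ↔ ∃ i ∈ Finset.Icc 1 (n + 1), z i = t)
    (x : ℕ → ℝ)
    (hxpos : ∀ i ∈ Finset.Icc 1 n, 0 < x i)
    (hxmono : ∀ i ∈ Finset.Icc 1 n, ∀ j ∈ Finset.Icc 1 n, i < j → x i < x j)
    (hxroots : ∀ t : ℝ, (laguerre α n).eval t = 0 ↔ ∃ i ∈ Finset.Icc 1 n, x i = t) :
    (∀ i ∈ Finset.Icc 1 n, z i < x i ∧ x i < z (i + 1)) ↔ (n : ℝ) + 1 < z 1 :=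
  laguerre_interlacing_iff_smallest_zero_gt_general α hα n hnc z hzpos hzmono hzroots x hxmono
    hxroots
end

section
/- For every real α and every n ∈ ℕ, the polynomial identity x² · L_n^{(α+3)}(x) = (x² + (α + 1 − n)x + (α+1)(α+2)) · L_n^{(α+1)}(x) − (α + n + 1)(x + α + 2) · L_n^{(α)}(x) holds in ℝ[x]. -/
/-!
Both sides are combinations of `L_n^{(α)}`, `L_n^{(α+1)}`, `L_n^{(α+3)}` obtained from the
contiguous relation `x L_n^{(α+2)} = (x + α + 1) L_n^{(α+1)} - (α + n + 1) L_n^{(α)}`: apply it at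
`α + 1`, multiply by `x`, and eliminate `x L_n^{(α+2)}` with the relation at `α`.
The `k`-th coefficient of `L_n^{(α)}` is `(-1)^k (α + k + 1)^{(n-k)} / ((n-k)! k!)` with a rising
factorial, so the contiguous relation comes down coefficientwise to
`(y)^{(m+1)} = (y)^{(m)} (y + m) = y (y + 1)^{(m)}`.
-/

open Polynomial Finset

open scoped Nat

theorem prod_Icc_add_eq_ascPochhammer_eval {R : Type*} [CommSemiring R] (a : R) (k m : ℕ) :
    ∏ j ∈ Icc (k + 1) (k + m), (a + j) = (ascPochhammer R m).eval (a + k + 1) := by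
  induction m with
  | zero => simp
  | succ m ih =>
    rw [← add_assoc, prod_Icc_succ_top (by omega), ih, ascPochhammer_succ_eval]
    push_cast
    ring

theorem mul_ascPochhammer_eval_add_one {R : Type*} [CommSemiring R] (x : R) (m : ℕ) :
    x * (ascPochhammer R m).eval (x + 1) = (ascPochhammer R m).eval x * (x + m) := by
  rw [← ascPochhammer_succ_eval, ascPochhammer_succ_left, eval_mul, eval_X, eval_comp, eval_add,
    eval_X, eval_one]

theorem coeff_laguerre (α : ℝ) (n k : ℕ) :
    (laguerre α n).coeff k = if k ≤ n then
      (-1) ^ k * (∏ j ∈ Icc (k + 1) n, (α + j)) / ((n - k)! * k !) else 0 := by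
  simp [laguerre, coeff_C_mul, coeff_X_pow]

theorem coeff_laguerre_of_lt {α : ℝ} {n k : ℕ} (h : n < k) : (laguerre α n).coeff k = 0 := by
  rw [coeff_laguerre, if_neg h.not_ge]

theorem coeff_laguerre_of_le (α β : ℝ) {n k : ℕ} (h : n ≤ k) :
    (laguerre α n).coeff k = (laguerre β n).coeff k := by
  simp only [coeff_laguerre, Icc_eq_empty_of_lt (Nat.lt_succ_of_le h), prod_empty]

theorem coeff_laguerre_add (α : ℝ) (k m : ℕ) :
    (laguerre α (k + m)).coeff k =
      (-1) ^ k * (ascPochhammer ℝ m).eval (α + k + 1) / (m ! * k !) := by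
  rw [coeff_laguerre, if_pos (Nat.le_add_right k m), prod_Icc_add_eq_ascPochhammer_eval,
    Nat.add_sub_cancel_left]

theorem add_one_mul_coeff_zero_laguerre_add_one (α : ℝ) (n : ℕ) :
    (α + 1) * (laguerre (α + 1) n).coeff 0 = (α + n + 1) * (laguerre α n).coeff 0 := by
  have hcoeff (β : ℝ) : (laguerre β n).coeff 0 = (ascPochhammer ℝ n).eval (β + 1) / n ! := by
    simpa using coeff_laguerre_add β 0 n
  rw [hcoeff, hcoeff, mul_div_assoc', mul_div_assoc', mul_ascPochhammer_eval_add_one]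
  ring

theorem coeff_laguerre_add_two_of_lt (α : ℝ) {n k : ℕ} (h : k < n) :
    (laguerre (α + 2) n).coeff k =
      (laguerre (α + 1) n).coeff k + (α + 1) * (laguerre (α + 1) n).coeff (k + 1) -
        (α + n + 1) * (laguerre α n).coeff (k + 1) := by
  obtain ⟨m, rfl⟩ := Nat.exists_eq_add_of_lt h
  have hk (β : ℝ) : (laguerre β (k + m + 1)).coeff k =
      (-1) ^ k * (ascPochhammer ℝ (m + 1)).eval (β + k + 1) / ((m + 1)! * k !) :=
    coeff_laguerre_add β k (m + 1)
  have hk₁ (β : ℝ) : (laguerre β (k + m + 1)).coeff (k + 1) =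
      (-1) ^ (k + 1) * (ascPochhammer ℝ m).eval (β + (k + 1 : ℕ) + 1) / (m ! * (k + 1)!) := by
    rw [add_right_comm, coeff_laguerre_add]
  rw [hk, hk, hk₁, hk₁, show α + 2 + (k : ℝ) + 1 = α + k + 2 + 1 by ring,
    show α + 1 + (k : ℝ) + 1 = α + k + 2 by ring,
    show α + 1 + ((k + 1 : ℕ) : ℝ) + 1 = α + k + 2 + 1 by push_cast; ring,
    show α + ((k + 1 : ℕ) : ℝ) + 1 = α + k + 2 by push_cast; ring,
    Nat.factorial_succ, Nat.factorial_succ, pow_succ]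
  have e₁ := ascPochhammer_succ_eval m (α + k + 2 + 1)
  have e₂ := mul_ascPochhammer_eval_add_one (α + k + 2) m
  have e₃ := ascPochhammer_succ_eval m (α + k + 2)
  push_cast
  field_simp
  linear_combination (k + 1 : ℝ) * e₁ - (k + 1 : ℝ) * e₃ + (k + m + 2 : ℝ) * e₂

theorem X_mul_laguerre_add_two (α : ℝ) (n : ℕ) :
    X * laguerre (α + 2) n =
      (X + C (α + 1)) * laguerre (α + 1) n - C (α + n + 1) * laguerre α n := by
  ext j
  rw [coeff_sub, add_mul, coeff_add, coeff_C_mul, coeff_C_mul]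
  rcases j with _ | k
  · simp only [mul_coeff_zero, coeff_X_zero, zero_mul, zero_add,
      add_one_mul_coeff_zero_laguerre_add_one, sub_self]
  rw [coeff_X_mul, coeff_X_mul]
  rcases lt_or_ge k n with hkn | hnk
  · exact coeff_laguerre_add_two_of_lt α hkn
  · rw [coeff_laguerre_of_lt (Nat.lt_succ_of_le hnk), coeff_laguerre_of_lt (Nat.lt_succ_of_le hnk),
      coeff_laguerre_of_le (α + 2) (α + 1) hnk, mul_zero, mul_zero, add_zero, sub_zero]

theorem laguerre_mixed_recurrence_equal_deg_param_three (α : ℝ) (n : ℕ) :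
    Polynomial.X ^ 2 * laguerre (α + 3) n =
      (Polynomial.X ^ 2 + Polynomial.C (α + 1 - (n : ℝ)) * Polynomial.X +
          Polynomial.C ((α + 1) * (α + 2))) * laguerre (α + 1) n -
        Polynomial.C (α + (n : ℝ) + 1) * (Polynomial.X + Polynomial.C (α + 2)) *
          laguerre α n := by
  have h₁ := X_mul_laguerre_add_two (α + 1) n
  have h₀ := X_mul_laguerre_add_two α n
  rw [show α + 1 + 2 = α + 3 by ring, show α + 1 + 1 = α + 2 by ring] at h₁
  simp only [map_add, map_sub, map_mul, map_natCast, map_one, map_ofNat] at h₀ h₁ ⊢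
  linear_combination X * h₁ + (X + C α + 2) * h₀
end
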